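/- (Standard liftings form a basis.) Let γ be a partition of n. Call π ∈ Π_γ standard if, for every c ≥ 1 and all block indices i < j such that blocks i and j of π both have size ≥ c, the c-th smallest element of block i is less than the c-th smallest element of block j. Let v ∈ V_γ* (the Specht submodule of ℝ^{Π_γ}) with v ≠ 0, and let π_0 ∈ Π_γ. Then {B_π v : π ∈ Π_γ standard} is a basis of the left S_n-module span{ρ_L(σ)(B_{π_0} v) : σ ∈ S_n} ⊆ ℝ^{S_n}; in particular this subspace equals span{B_μ v : μ ∈ Π_γ} and its dimension equals the number of standard ordered set partitions of shape γ. -/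

import Mathlib

open Finset

/-- Ordered set partitions of `Fin n` of shape `γ : Fin ℓ → ℕ`: functions
`μ : Fin n → Fin ℓ` whose `j`-th block `μ⁻¹(j)` has exactly `γ j` elements. -/
def OSP (n ℓ : ℕ) (γ : Fin ℓ → ℕ) : Type :=
  {μ : Fin n → Fin ℓ // ∀ j : Fin ℓ, (Finset.univ.filter fun x => μ x = j).card = γ j}

instance {n ℓ : ℕ} {γ : Fin ℓ → ℕ} : Fintype (OSP n ℓ γ) := by
  unfold OSP; infer_instance

instance {n ℓ : ℕ} {γ : Fin ℓ → ℕ} : DecidableEq (OSP n ℓ γ) := by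
  unfold OSP; infer_instance

/-- The left action of `S_n` on ordered set partitions: `(σ · μ)(x) = μ (σ⁻¹ x)`. -/
def ospAct {n ℓ : ℕ} {γ : Fin ℓ → ℕ} (σ : Equiv.Perm (Fin n)) (μ : OSP n ℓ γ) : OSP n ℓ γ :=
  ⟨fun x => μ.1 (σ.symm x), fun j => by
    rw [← μ.2 j, ← Fintype.card_subtype, ← Fintype.card_subtype]
    exact Fintype.card_congr (σ.symm.subtypeEquiv fun a => Iff.rfl)⟩

/-- The characteristic ("lifting") map `B_π : ℝ^{Π_γ} → ℝ^{S_n}` given by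
`(B_π x)(σ) = x (σ⁻¹ · π)`. -/
def liftB {n ℓ : ℕ} {γ : Fin ℓ → ℕ} (π : OSP n ℓ γ) (x : OSP n ℓ γ → ℝ) :
    Equiv.Perm (Fin n) → ℝ :=
  fun σ => x (ospAct σ⁻¹ π)

/-- The (0-indexed) column of `x` in the ordered set partition `μ`: `x` lies in column `c`
iff `x` is the `(c+1)`-st smallest element of its block, i.e. exactly `c` elements of the
block of `x` are smaller than `x`. -/
def colOf {n ℓ : ℕ} {γ : Fin ℓ → ℕ} (μ : OSP n ℓ γ) (x : Fin n) : ℕ :=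
  (Finset.univ.filter fun y => μ.1 y = μ.1 x ∧ y < x).card

/-- The column group `C_μ`: permutations preserving each column of `μ` setwise. -/
def colGroup {n ℓ : ℕ} {γ : Fin ℓ → ℕ} (μ : OSP n ℓ γ) : Finset (Equiv.Perm (Fin n)) :=
  Finset.univ.filter fun β => ∀ x : Fin n, colOf μ (β x) = colOf μ x

/-- The polytabloid `q_μ = ∑_{β ∈ C_μ} sign(β)·e_{β⁻¹·μ} ∈ ℝ^{Π_γ}`. -/
def polytabloid {n ℓ : ℕ} {γ : Fin ℓ → ℕ} (μ : OSP n ℓ γ) : OSP n ℓ γ → ℝ :=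
  fun ρ => ∑ β ∈ colGroup μ,
    if ospAct β⁻¹ μ = ρ then ((Equiv.Perm.sign β : ℤ) : ℝ) else 0

/-- The Specht submodule `V_γ* ⊆ ℝ^{Π_γ}`: the span of the polytabloids. -/
def Specht (n ℓ : ℕ) (γ : Fin ℓ → ℕ) : Submodule ℝ (OSP n ℓ γ → ℝ) :=
  Submodule.span ℝ (Set.range (polytabloid (n := n) (ℓ := ℓ) (γ := γ)))

/-- The left regular representation of `S_n` on `ℝ^{S_n}`: `(ρ_L(τ) f)(σ) = f (τ⁻¹ σ)`. -/
def rhoL {n : ℕ} (τ : Equiv.Perm (Fin n)) (f : Equiv.Perm (Fin n) → ℝ) :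
    Equiv.Perm (Fin n) → ℝ :=
  fun σ => f (τ⁻¹ * σ)

/-- An ordered set partition is standard if, whenever `x` and `y` occupy the same column
(both are the `c`-th smallest of their respective blocks) and the block of `x` precedes
the block of `y`, then `x < y`. -/
def IsStandard {n ℓ : ℕ} {γ : Fin ℓ → ℕ} (μ : OSP n ℓ γ) : Prop :=
  ∀ x y : Fin n, colOf μ x = colOf μ y → μ.1 x < μ.1 y → x < y

/-!
The liftings are the images of the standard basis vectors under `x ↦ (σ ↦ x ⬝ σ v)`, whose
kernel is the orthogonal complement of the cyclic module `ℝ[S_n] v`. The column antisymmetriser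
of a tableau `t` maps every `w` to `(w ⬝ e_t) e_t` (James), so `ℝ[S_n] v` contains every
polytabloid, and a vanishing combination of standard liftings is orthogonal to all standard
polytabloids. These are unitriangular in the colex order on ordered set partitions, so the
combination is trivial. Conversely, column swaps and Garnir relations straighten every polytabloid
into a combination of standard ones, so `ℝ[S_n] v` lies in their span and the liftings span a space
of dimension at most the number of standard partitions.
-/

open Equiv Equiv.Perm

lemma exists_ne_forall_gt_eq {ι α : Type*} [LinearOrder ι] [Fintype ι] {f g : ι → α}
    (h : f ≠ g) : ∃ x, f x ≠ g x ∧ ∀ y, x < y → f y = g y := by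
  classical
  obtain ⟨x₀, hx₀⟩ := Function.ne_iff.1 h
  obtain ⟨x, hx, hmax⟩ := (univ.filter fun x => f x ≠ g x).exists_max_image id ⟨x₀, by simpa⟩
  exact ⟨x, (mem_filter.1 hx).2, fun y hy => by_contra fun h => (hmax y (by simpa)).not_gt hy⟩

lemma dotProduct_eq_zero_of_mem_span {ι R : Type*} [Fintype ι] [CommSemiring R]
    {s : Set (ι → R)} {x w : ι → R} (hs : ∀ u ∈ s, x ⬝ᵥ u = 0) (hw : w ∈ Submodule.span R s) :
    x ⬝ᵥ w = 0 :=
  Submodule.span_le (p := LinearMap.ker (dotProductBilin R R x)) |>.2 hs hw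

lemma LinearMap.finrank_range_le_of_ker_le {K V W W' : Type*} [DivisionRing K] [AddCommGroup V]
    [Module K V] [FiniteDimensional K V] [AddCommGroup W] [Module K W] [AddCommGroup W']
    [Module K W'] (f : V →ₗ[K] W) (g : V →ₗ[K] W') (h : LinearMap.ker g ≤ LinearMap.ker f) :
    Module.finrank K (LinearMap.range f) ≤ Module.finrank K (LinearMap.range g) := by
  have := f.finrank_range_add_finrank_ker
  have := g.finrank_range_add_finrank_ker
  have := Submodule.finrank_mono h
  omega

namespace Equiv.Perm

variable {α : Type*}

theorem sum_sign_smul_eq_zero_of_mul_swap {M : Type*} [DecidableEq α] [Fintype α] [AddCommGroup M]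
    {s : Finset (Perm α)} {a b : α} (hab : a ≠ b) (hs : ∀ σ ∈ s, σ * swap a b ∈ s)
    {f : Perm α → M} (hf : ∀ σ ∈ s, f (σ * swap a b) = f σ) : ∑ σ ∈ s, sign σ • f σ = 0 := by
  refine sum_involution (fun σ _ => σ * swap a b) (fun σ hσ => ?_) (fun σ _ _ h => ?_)
    hs (fun σ _ => by simp [mul_assoc])
  · rw [hf σ hσ, sign_mul, sign_swap hab, mul_neg_one, Units.neg_smul, add_neg_cancel]
  · exact hab (by simpa using congrArg (· b) (mul_eq_left.1 h))

lemma mem_of_apply_mem {σ : Perm α} {s : Finset α} (hs : ∀ x ∈ s, σ x ∈ s) {x : α}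
    (hx : σ x ∈ s) : x ∈ s := by
  obtain ⟨y, hy, hyx⟩ := surjOn_of_injOn_of_card_le σ hs σ.injective.injOn le_rfl hx
  rwa [← σ.injective hyx]

lemma apply_mem_of_support_subset [DecidableEq α] [Fintype α] {σ : Perm α} {s : Finset α}
    (hσ : σ.support ⊆ s) {x : α} (hx : x ∈ s) : σ x ∈ s := by
  by_cases h : x ∈ σ.support
  · exact hσ (apply_mem_support.2 h)
  · rwa [notMem_support.1 h]

end Equiv.Perm

section

variable {n ℓ : ℕ} {γ : Fin ℓ → ℕ}

instance : MulAction (Perm (Fin n)) (OSP n ℓ γ) where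
  smul := ospAct
  one_smul _ := rfl
  mul_smul _ _ _ := rfl

instance : DecidablePred (IsStandard (n := n) (ℓ := ℓ) (γ := γ)) := fun μ => by
  unfold IsStandard; infer_instance

lemma ospAct_eq_smul (σ : Perm (Fin n)) (μ : OSP n ℓ γ) : ospAct σ μ = σ • μ := rfl

@[simp] lemma OSP.smul_apply (σ : Perm (Fin n)) (μ : OSP n ℓ γ) (x : Fin n) :
    (σ • μ).1 x = μ.1 (σ⁻¹ x) := rfl

lemma OSP.swap_smul_eq_self {μ : OSP n ℓ γ} {a b : Fin n} (h : μ.1 a = μ.1 b) :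
    swap a b • μ = μ :=
  Subtype.ext (funext fun x => by
    rcases eq_or_ne x a with rfl | hxa
    · simp [h]
    rcases eq_or_ne x b with rfl | hxb
    · simp [h]
    · simp [swap_apply_of_ne_of_ne hxa hxb])

lemma rhoL_liftB (σ : Perm (Fin n)) (π : OSP n ℓ γ) (v : OSP n ℓ γ → ℝ) :
    rhoL σ (liftB π v) = liftB (σ • π) v := by
  funext τ
  simp only [rhoL, liftB, ospAct_eq_smul, mul_inv_rev, inv_inv, mul_smul]

def permAct (σ : Perm (Fin n)) : (OSP n ℓ γ → ℝ) →ₗ[ℝ] OSP n ℓ γ → ℝ :=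
  LinearMap.funLeft ℝ ℝ (σ⁻¹ • ·)

@[simp] lemma permAct_apply (σ : Perm (Fin n)) (x : OSP n ℓ γ → ℝ) (ρ : OSP n ℓ γ) :
    permAct σ x ρ = x (σ⁻¹ • ρ) := rfl

lemma permAct_mul (σ τ : Perm (Fin n)) (x : OSP n ℓ γ → ℝ) :
    permAct (σ * τ) x = permAct σ (permAct τ x) := by
  funext ρ
  simp [mul_smul]

lemma permAct_single (σ : Perm (Fin n)) (μ : OSP n ℓ γ) :
    permAct σ (Pi.single μ 1) = Pi.single (σ • μ) 1 := by
  funext ρ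
  simp only [permAct_apply, Pi.single_apply, inv_smul_eq_iff]

lemma permAct_dotProduct_permAct (σ : Perm (Fin n)) (x y : OSP n ℓ γ → ℝ) :
    permAct σ x ⬝ᵥ permAct σ y = x ⬝ᵥ y :=
  Equiv.sum_comp (MulAction.toPerm σ⁻¹) fun ρ => x ρ * y ρ

lemma colOf_lt (μ : OSP n ℓ γ) (x : Fin n) : colOf μ x < γ (μ.1 x) := by
  rw [← μ.2 (μ.1 x)]
  refine card_lt_card (ssubset_iff_of_subset (fun y hy => ?_) |>.2 ⟨x, by simp, by simp⟩)
  simp only [mem_filter, mem_univ, true_and] at hy ⊢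
  exact hy.1

lemma colOf_lt_colOf {μ : OSP n ℓ γ} {x y : Fin n} (hb : μ.1 x = μ.1 y) (hxy : x < y) :
    colOf μ x < colOf μ y := by
  refine card_lt_card (ssubset_iff_of_subset (fun z hz => ?_) |>.2 ⟨x, by simp [hb, hxy], by simp⟩)
  simp only [mem_filter, mem_univ, true_and] at hz ⊢
  exact ⟨hz.1.trans hb, hz.2.trans hxy⟩

lemma eq_of_colOf_eq {μ : OSP n ℓ γ} {x y : Fin n} (hb : μ.1 x = μ.1 y)
    (hc : colOf μ x = colOf μ y) : x = y := by
  rcases lt_trichotomy x y with h | h | h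
  · exact absurd hc (colOf_lt_colOf hb h).ne
  · exact h
  · exact absurd hc (colOf_lt_colOf hb.symm h).ne'

lemma exists_colOf_eq (μ : OSP n ℓ γ) {j : Fin ℓ} {c : ℕ} (hc : c < γ j) :
    ∃ x, μ.1 x = j ∧ colOf μ x = c := by
  have hmaps : Set.MapsTo (colOf μ) (univ.filter fun x => μ.1 x = j) (range (γ j)) :=
    fun x hx => by simpa [(mem_filter.1 hx).2] using colOf_lt μ x
  have hinj : Set.InjOn (colOf μ) (univ.filter fun x => μ.1 x = j) := fun x hx y hy h =>
    eq_of_colOf_eq ((mem_filter.1 hx).2.trans (mem_filter.1 hy).2.symm) h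
  obtain ⟨x, hx, rfl⟩ := surjOn_of_injOn_of_card_le _ hmaps hinj (by rw [card_range, μ.2 j])
    (mem_range.2 hc)
  exact ⟨x, (mem_filter.1 hx).2, rfl⟩

/-- A numbering of the cells `{(j, c) | c < γ j}` of the diagram of `γ` by `Fin n`: the entry `x`
sits in row `row x` and column `col x`. -/
@[ext] structure Tableau (n ℓ : ℕ) (γ : Fin ℓ → ℕ) where
  row : Fin n → Fin ℓ
  col : Fin n → ℕ
  col_lt : ∀ x, col x < γ (row x)
  eq_of_row_col : ∀ x y, row x = row y → col x = col y → x = y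
  exists_row_col : ∀ j c, c < γ j → ∃ x, row x = j ∧ col x = c

namespace Tableau

variable (t : Tableau n ℓ γ)

lemma card_row_col_lt (j : Fin ℓ) (c : ℕ) :
    #{x | t.row x = j ∧ t.col x < c} = min c (γ j) := by
  rw [← card_range (min c (γ j))]
  refine card_bij (fun x _ => t.col x) (fun x hx => ?_) (fun x hx y hy h => ?_) fun d hd => ?_
  · simp only [mem_filter, mem_univ, true_and] at hx
    simpa [← hx.1, hx.2] using t.col_lt x
  · simp only [mem_filter, mem_univ, true_and] at hx hy
    exact t.eq_of_row_col x y (hx.1.trans hy.1.symm) h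
  · obtain ⟨x, hx, rfl⟩ := t.exists_row_col j d (lt_min_iff.1 (mem_range.1 hd)).2
    exact ⟨x, by simpa [hx] using (lt_min_iff.1 (mem_range.1 hd)).1, rfl⟩

lemma card_row (j : Fin ℓ) : #{x | t.row x = j} = γ j := by
  rw [← min_self (γ j), ← t.card_row_col_lt]
  congr 1
  ext x
  simpa using fun h => h ▸ t.col_lt x

def toOSP : OSP n ℓ γ := ⟨t.row, t.card_row⟩

@[simp] lemma toOSP_apply (x : Fin n) : t.toOSP.1 x = t.row x := rfl

def ofOSP (μ : OSP n ℓ γ) : Tableau n ℓ γ where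
  row := μ.1
  col := colOf μ
  col_lt := colOf_lt μ
  eq_of_row_col _ _ := eq_of_colOf_eq
  exists_row_col _ _ := exists_colOf_eq μ

@[simp] lemma ofOSP_col (μ : OSP n ℓ γ) : (ofOSP μ).col = colOf μ := rfl

@[simp] lemma toOSP_ofOSP (μ : OSP n ℓ γ) : (ofOSP μ).toOSP = μ := rfl

instance : SMul (Perm (Fin n)) (Tableau n ℓ γ) where
  smul σ t :=
    { row := fun x => t.row (σ⁻¹ x)
      col := fun x => t.col (σ⁻¹ x)
      col_lt := fun x => t.col_lt _
      eq_of_row_col := fun x y h₁ h₂ => σ⁻¹.injective (t.eq_of_row_col _ _ h₁ h₂)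
      exists_row_col := fun j c hc => by
        obtain ⟨x, hx⟩ := t.exists_row_col j c hc
        exact ⟨σ x, by simpa using hx⟩ }

@[simp] lemma smul_row (σ : Perm (Fin n)) (x : Fin n) : (σ • t).row x = t.row (σ⁻¹ x) := rfl

@[simp] lemma smul_col (σ : Perm (Fin n)) (x : Fin n) : (σ • t).col x = t.col (σ⁻¹ x) := rfl

@[simp] lemma toOSP_smul (σ : Perm (Fin n)) : (σ • t).toOSP = σ • t.toOSP := rfl

instance : Finite (Tableau n ℓ γ) :=
  Finite.of_injective (fun t x => (⟨t.row x, ⟨t.col x, t.col_lt x⟩⟩ : (j : Fin ℓ) × Fin (γ j)))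
    fun _ _ h => Tableau.ext (funext fun x => congrArg (fun p => p.1) (congrFun h x))
      (funext fun x => congrArg (fun p => (p.2 : ℕ)) (congrFun h x))

lemma exists_smul_eq (s t : Tableau n ℓ γ) : ∃ σ : Perm (Fin n), σ • s = t := by
  choose f hf using fun x => t.exists_row_col (s.row x) (s.col x) (s.col_lt x)
  have hinj : Function.Injective f := fun x y h =>
    s.eq_of_row_col x y (by rw [← (hf x).1, ← (hf y).1, h]) (by rw [← (hf x).2, ← (hf y).2, h])
  let σ := Equiv.ofBijective f (Finite.injective_iff_bijective.1 hinj)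
  have hσ (x : Fin n) : f (σ⁻¹ x) = x := σ.apply_symm_apply x
  refine ⟨σ, Tableau.ext (funext fun x => ?_) (funext fun x => ?_)⟩
  · rw [smul_row, ← (hf _).1, hσ]
  · rw [smul_col, ← (hf _).2, hσ]

def colPerms : Finset (Perm (Fin n)) := {β | ∀ x, t.col (β x) = t.col x}

def polytabloid : OSP n ℓ γ → ℝ :=
  ∑ β ∈ t.colPerms, sign β • Pi.single (β⁻¹ • t.toOSP) 1

variable {t}

lemma mem_colPerms {β : Perm (Fin n)} : β ∈ t.colPerms ↔ ∀ x, t.col (β x) = t.col x := by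
  simp [colPerms]

lemma one_mem_colPerms : 1 ∈ t.colPerms := mem_colPerms.2 fun _ => rfl

lemma mul_mem_colPerms {α β : Perm (Fin n)} (hα : α ∈ t.colPerms) (hβ : β ∈ t.colPerms) :
    α * β ∈ t.colPerms :=
  mem_colPerms.2 fun x => (mem_colPerms.1 hα (β x)).trans (mem_colPerms.1 hβ x)

lemma inv_mem_colPerms {β : Perm (Fin n)} (hβ : β ∈ t.colPerms) : β⁻¹ ∈ t.colPerms :=
  mem_colPerms.2 fun x => by simpa using (mem_colPerms.1 hβ (β⁻¹ x)).symm

lemma mul_mem_colPerms_iff {α β : Perm (Fin n)} (hβ : β ∈ t.colPerms) :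
    α * β ∈ t.colPerms ↔ α ∈ t.colPerms :=
  ⟨fun h => by simpa using mul_mem_colPerms h (inv_mem_colPerms hβ),
    fun h => mul_mem_colPerms h hβ⟩

lemma mem_colPerms_smul {σ β : Perm (Fin n)} :
    β ∈ (σ • t).colPerms ↔ σ⁻¹ * β * σ ∈ t.colPerms := by
  simp only [mem_colPerms, smul_col, Perm.mul_apply]
  exact ⟨fun h x => by simpa using h (σ x), fun h x => by simpa using h (σ⁻¹ x)⟩

lemma swap_mem_colPerms {a b : Fin n} (h : t.col a = t.col b) : swap a b ∈ t.colPerms :=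
  mem_colPerms.2 fun x => by
    rcases eq_or_ne x a with rfl | hxa
    · simp [h]
    rcases eq_or_ne x b with rfl | hxb
    · simp [h]
    · rw [swap_apply_of_ne_of_ne hxa hxb]

lemma polytabloid_ofOSP (μ : OSP n ℓ γ) : (ofOSP μ).polytabloid = _root_.polytabloid μ := by
  funext ρ
  simp [polytabloid, _root_.polytabloid, colPerms, colGroup, Finset.sum_apply,
    Pi.single_apply, Units.smul_def, eq_comm, ospAct_eq_smul]

lemma polytabloid_smul (σ : Perm (Fin n)) : (σ • t).polytabloid = permAct σ t.polytabloid := by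
  simp only [polytabloid, map_sum]
  refine (sum_equiv (MulAut.conj σ).toEquiv (fun β => ?_) fun β _ => ?_).symm
  · simp [mem_colPerms_smul, mul_assoc]
  · simp only [MulEquiv.toEquiv_eq_coe, MulEquiv.coe_toEquiv, MulAut.conj_apply, map_zsmul_unit,
      permAct_single, toOSP_smul, Perm.sign_mul, sign_inv, mul_inv_rev, inv_inv, mul_smul,
      inv_smul_smul]
    rw [smul_comm (sign σ), ← mul_smul (sign σ), Int.units_mul_self, one_smul]

lemma permAct_polytabloid {β : Perm (Fin n)} (hβ : β ∈ t.colPerms) :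
    permAct β t.polytabloid = sign β • t.polytabloid := by
  simp only [polytabloid, map_sum, map_zsmul_unit, permAct_single, smul_sum]
  refine sum_equiv (Equiv.mulRight β⁻¹) (fun α => ?_) fun α _ => ?_
  · simp [mul_mem_colPerms_iff (inv_mem_colPerms hβ)]
  · simp only [coe_mulRight, Perm.sign_mul, sign_inv, mul_inv_rev, inv_inv, mul_smul]
    rw [smul_comm (sign β), ← mul_smul (sign β), Int.units_mul_self, one_smul]

lemma polytabloid_swap_smul {a b : Fin n} (hab : a ≠ b) (h : t.col a = t.col b) :
    (swap a b • t).polytabloid = -t.polytabloid := by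
  rw [polytabloid_smul, permAct_polytabloid (swap_mem_colPerms h), sign_swap hab, Units.neg_smul,
    one_smul]

lemma eq_of_inv_smul_eq {β β' : Perm (Fin n)} (hβ : β ∈ t.colPerms) (hβ' : β' ∈ t.colPerms)
    (h : β⁻¹ • t.toOSP = β'⁻¹ • t.toOSP) : β = β' := by
  ext x
  have hrow : t.row (β x) = t.row (β' x) := by simpa using congrArg (fun μ => μ.1 x) h
  rw [t.eq_of_row_col _ _ hrow ((mem_colPerms.1 hβ x).trans (mem_colPerms.1 hβ' x).symm)]

lemma polytabloid_apply_inv_smul {β : Perm (Fin n)} (hβ : β ∈ t.colPerms) :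
    t.polytabloid (β⁻¹ • t.toOSP) = sign β := by
  simp only [polytabloid, Finset.sum_apply, Pi.smul_apply, Pi.single_apply]
  rw [sum_eq_single β (fun α hα hne => by
    rw [if_neg fun h => hne (eq_of_inv_smul_eq hα hβ h.symm), smul_zero]) (fun h => absurd hβ h),
    if_pos rfl, Units.smul_def, zsmul_one]

lemma exists_inv_smul_eq_of_polytabloid_apply_ne_zero {μ : OSP n ℓ γ}
    (h : t.polytabloid μ ≠ 0) : ∃ β ∈ t.colPerms, β⁻¹ • t.toOSP = μ := by
  contrapose! h
  simp only [polytabloid, Finset.sum_apply, Pi.smul_apply, Pi.single_apply]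
  exact sum_eq_zero fun β hβ => by rw [if_neg (h β hβ).symm, smul_zero]

lemma card_row_col_lt_of_injective {μ : OSP n ℓ γ}
    (hμ : ∀ x y, t.col x = t.col y → μ.1 x = μ.1 y → x = y) (j : Fin ℓ) (c : ℕ) :
    #{x | μ.1 x = j ∧ t.col x < c} = min c (γ j) := by
  -- Each count is at most `min c (γ j)`, and the counts add up to those of `t` itself.
  have hfiber (f : Fin n → Fin ℓ) :
      #{x | t.col x < c} = ∑ j, #{x | f x = j ∧ t.col x < c} := by
    rw [card_eq_sum_card_fiberwise (f := f) (t := univ) (by simp)]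
    simp only [filter_filter, and_comm]
  have hle (j : Fin ℓ) : #{x | μ.1 x = j ∧ t.col x < c} ≤ min c (γ j) := by
    refine le_min ?_ ?_
    · refine (card_le_card_of_injOn t.col (t := range c) (fun x hx => ?_) fun x hx y hy h => ?_)
        |>.trans_eq (card_range c)
      · exact mem_range.2 (mem_filter.1 hx).2.2
      · exact hμ x y h ((mem_filter.1 hx).2.1.trans (mem_filter.1 hy).2.1.symm)
    · exact (card_le_card (monotone_filter_right _ fun _ _ h => h.1)).trans (μ.2 j).le
  have hsum : ∑ j, #{x | μ.1 x = j ∧ t.col x < c} = ∑ j, min c (γ j) := by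
    simp only [← hfiber μ.1, hfiber t.row, t.card_row_col_lt]
  exact (sum_eq_sum_iff_of_le fun j _ => hle j).1 hsum j (mem_univ j)

lemma col_lt_of_injective {μ : OSP n ℓ γ}
    (hμ : ∀ x y, t.col x = t.col y → μ.1 x = μ.1 y → x = y) (x : Fin n) :
    t.col x < γ (μ.1 x) := by
  by_contra! h
  have hcard := card_row_col_lt_of_injective hμ (μ.1 x) (t.col x)
  rw [min_eq_right h, ← μ.2 (μ.1 x)] at hcard
  have hx : x ∈ ({x' | μ.1 x' = μ.1 x} : Finset _) := by simp
  rw [← eq_of_subset_of_card_le (monotone_filter_right _ fun _ _ h => h.1) hcard.ge] at hx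
  exact lt_irrefl _ (mem_filter.1 hx).2.2

lemma exists_mem_colPerms_inv_smul_eq {μ : OSP n ℓ γ}
    (hμ : ∀ x y, t.col x = t.col y → μ.1 x = μ.1 y → x = y) :
    ∃ β ∈ t.colPerms, β⁻¹ • t.toOSP = μ := by
  choose f hf using fun x => t.exists_row_col (μ.1 x) (t.col x) (col_lt_of_injective hμ x)
  have hinj : Function.Injective f := fun x y h =>
    hμ x y (by rw [← (hf x).2, ← (hf y).2, h]) (by rw [← (hf x).1, ← (hf y).1, h])
  exact ⟨Equiv.ofBijective f (Finite.injective_iff_bijective.1 hinj),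
    mem_colPerms.2 fun x => (hf x).2, Subtype.ext (funext fun x => (hf x).1)⟩

lemma sum_sign_smul_single (μ : OSP n ℓ γ) :
    ∑ β ∈ t.colPerms, sign β • Pi.single (β • μ) (1 : ℝ) = t.polytabloid μ • t.polytabloid := by
  by_cases hμ : ∀ x y, t.col x = t.col y → μ.1 x = μ.1 y → x = y
  · obtain ⟨β₀, hβ₀, rfl⟩ := exists_mem_colPerms_inv_smul_eq hμ
    rw [polytabloid_apply_inv_smul hβ₀, Int.cast_smul_eq_zsmul, ← Units.smul_def, polytabloid,
      smul_sum]
    refine sum_equiv ((Equiv.inv _).trans (Equiv.mulLeft β₀)) (fun β => ?_) fun β _ => ?_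
    · exact ⟨fun h => mul_mem_colPerms hβ₀ (inv_mem_colPerms h),
        fun h => by simpa using inv_mem_colPerms (mul_mem_colPerms (inv_mem_colPerms hβ₀) h)⟩
    · simp only [Equiv.trans_apply, Equiv.inv_apply, coe_mulLeft, Perm.sign_mul, sign_inv,
        mul_inv_rev, inv_inv, mul_smul]
      rw [← mul_smul (sign β₀), Int.units_mul_self, one_smul]
  · push Not at hμ
    obtain ⟨a, b, hcol, hrow, hab⟩ := hμ
    have hzero : t.polytabloid μ = 0 := by
      by_contra h
      obtain ⟨β, hβ, rfl⟩ := exists_inv_smul_eq_of_polytabloid_apply_ne_zero h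
      refine hab (β.injective (t.eq_of_row_col _ _ (by simpa using hrow) ?_))
      rw [mem_colPerms.1 hβ, mem_colPerms.1 hβ, hcol]
    rw [hzero, zero_smul]
    exact Perm.sum_sign_smul_eq_zero_of_mul_swap hab
      (fun β hβ => mul_mem_colPerms hβ (swap_mem_colPerms hcol))
      fun β _ => by rw [mul_smul, OSP.swap_smul_eq_self hrow]

variable (t) in
lemma sum_sign_smul_permAct (w : OSP n ℓ γ → ℝ) :
    ∑ β ∈ t.colPerms, sign β • permAct β w = (w ⬝ᵥ t.polytabloid) • t.polytabloid := by
  have hw : w = ∑ μ, w μ • Pi.single μ 1 := by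
    simp [← Pi.single_smul', univ_sum_single]
  calc ∑ β ∈ t.colPerms, sign β • permAct β w
      = ∑ μ, w μ • ∑ β ∈ t.colPerms, sign β • Pi.single (β • μ) (1 : ℝ) := by
        conv_lhs => rw [hw]
        simp only [map_sum, map_smul, permAct_single, smul_sum]
        rw [sum_comm]
        simp only [smul_comm (sign _)]
    _ = (w ⬝ᵥ t.polytabloid) • t.polytabloid := by
        simp only [sum_sign_smul_single, smul_smul, dotProduct, sum_smul]

end Tableau

lemma exists_dotProduct_polytabloid_ne_zero {v : OSP n ℓ γ → ℝ} (hv : v ∈ Specht n ℓ γ)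
    (hv0 : v ≠ 0) : ∃ μ, v ⬝ᵥ polytabloid μ ≠ 0 := by
  by_contra! h
  exact hv0 (dotProduct_self_eq_zero.1
    (dotProduct_eq_zero_of_mem_span (by rintro _ ⟨μ, rfl⟩; exact h μ) hv))

theorem polytabloid_mem_span_permAct {v : OSP n ℓ γ → ℝ} (hv : v ∈ Specht n ℓ γ) (hv0 : v ≠ 0)
    (τ : OSP n ℓ γ) :
    polytabloid τ ∈ Submodule.span ℝ (Set.range fun σ : Perm (Fin n) => permAct σ v) := by
  obtain ⟨μ, hμ⟩ := exists_dotProduct_polytabloid_ne_zero hv hv0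
  obtain ⟨σ, hσ⟩ := Tableau.exists_smul_eq (.ofOSP μ) (.ofOSP τ)
  have hdot : permAct σ v ⬝ᵥ (Tableau.ofOSP τ).polytabloid = v ⬝ᵥ polytabloid μ := by
    rw [← hσ, Tableau.polytabloid_smul, permAct_dotProduct_permAct, Tableau.polytabloid_ofOSP]
  have hκ := (Tableau.ofOSP τ).sum_sign_smul_permAct (permAct σ v)
  rw [hdot] at hκ
  rw [← Tableau.polytabloid_ofOSP, ← inv_smul_smul₀ hμ (Tableau.polytabloid _), ← hκ]
  refine Submodule.smul_mem _ _ (Submodule.sum_mem _ fun β _ => ?_)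
  rw [← permAct_mul]
  exact Submodule.smul_of_tower_mem _ _ (Submodule.subset_span ⟨_, rfl⟩)

lemma polytabloid_apply_self (μ : OSP n ℓ γ) : polytabloid μ μ = 1 := by
  simpa [Tableau.polytabloid_ofOSP] using
    (Tableau.ofOSP μ).polytabloid_apply_inv_smul Tableau.one_mem_colPerms

lemma toColex_inv_smul_lt {τ : OSP n ℓ γ} (hτ : IsStandard τ) {β : Perm (Fin n)}
    (hβ : β ∈ colGroup τ) (hne : β⁻¹ • τ ≠ τ) : toColex (β⁻¹ • τ).1 < toColex τ.1 := by
  have hcol : ∀ z, colOf τ (β z) = colOf τ z := (Tableau.mem_colPerms (t := .ofOSP τ)).1 hβ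
  obtain ⟨x, hx, hmax⟩ := exists_ne_forall_gt_eq fun h => hne (Subtype.ext h)
  simp only [OSP.smul_apply, inv_inv] at hx hmax
  refine ⟨x, hmax, (lt_or_gt_of_ne hx).resolve_right fun hgt => hx ?_⟩
  -- `β` fixes every entry it keeps in its row, in particular `β x`, which lies below `x`.
  have hxβ : x < β x := hτ x (β x) (hcol x).symm hgt
  rw [β.injective (eq_of_colOf_eq (hmax _ hxβ) (hcol (β x)))]

theorem eq_zero_of_dotProduct_polytabloid_eq_zero {x : OSP n ℓ γ → ℝ}
    (hsupp : ∀ ρ, x ρ ≠ 0 → IsStandard ρ) (hdot : ∀ τ, IsStandard τ → x ⬝ᵥ polytabloid τ = 0) :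
    x = 0 := by
  by_contra hx
  obtain ⟨τ, hτ, hmin⟩ := (InvImage.wf (fun μ : OSP n ℓ γ => toColex μ.1) wellFounded_lt).has_min
    {ρ | x ρ ≠ 0} (Function.ne_iff.1 hx)
  have hstd := hsupp τ hτ
  refine hτ ?_
  rw [← hdot τ hstd, dotProduct, sum_eq_single τ (fun ρ _ hρ => ?_) (by simp),
    polytabloid_apply_self, mul_one]
  by_contra h
  obtain ⟨hxρ, hqρ⟩ := mul_ne_zero_iff.1 h
  rw [← Tableau.polytabloid_ofOSP] at hqρ
  obtain ⟨β, hβ, rfl⟩ := Tableau.exists_inv_smul_eq_of_polytabloid_apply_ne_zero hqρ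
  exact hmin _ hxρ (toColex_inv_smul_lt hstd hβ hρ)

namespace Tableau

variable {t : Tableau n ℓ γ} {a b : Fin n}

-- Straightening moves up in this order: column swaps raise the row word, Garnir relations the
-- column word.
variable (t) in
def key : Colex (Fin n → ℕ) ×ₗ Colex (Fin n → Fin ℓ) := toLex (toColex t.col, toColex t.row)

lemma induction_key {P : Tableau n ℓ γ → Prop} (h : ∀ t, (∀ s, t.key < s.key → P s) → P t)
    (t : Tableau n ℓ γ) : P t :=
  have : IsTrans (Tableau n ℓ γ) (fun s t => t.key < s.key) := ⟨fun _ _ _ h₁ h₂ => h₂.trans h₁⟩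
  have : Std.Irrefl (fun s t : Tableau n ℓ γ => t.key < s.key) := ⟨fun _ => lt_irrefl _⟩
  (Finite.wellFounded_of_trans_of_irrefl _).induction t h

variable (t) in
def IsColumnSorted : Prop := ∀ x y, t.col x = t.col y → x < y → t.row x < t.row y

variable (t) in
def IsRowSorted : Prop := ∀ x y, t.row x = t.row y → t.col x < t.col y → x < y

lemma colOf_toOSP (ht : t.IsRowSorted) (x : Fin n) : colOf t.toOSP x = t.col x := by
  change #{y | t.row y = t.row x ∧ y < x} = t.col x
  rw [← min_eq_left (t.col_lt x).le, ← card_row_col_lt]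
  refine congrArg card (filter_congr fun y _ => and_congr_right fun hy =>
    ⟨fun hyx => lt_of_not_ge fun h => ?_, ht y x hy⟩)
  rcases h.lt_or_eq with h | h
  · exact (ht x y hy.symm h).not_gt hyx
  · exact hyx.ne (t.eq_of_row_col y x hy h.symm)

lemma ofOSP_toOSP (ht : t.IsRowSorted) : ofOSP t.toOSP = t :=
  Tableau.ext rfl (funext (colOf_toOSP ht))

lemma isStandard_toOSP (hc : t.IsColumnSorted) (hr : t.IsRowSorted) : IsStandard t.toOSP :=
  fun x y hxy hrow => by
    rw [colOf_toOSP hr, colOf_toOSP hr] at hxy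
    rcases lt_trichotomy x y with h | rfl | h
    · exact h
    · exact absurd hrow (lt_irrefl _)
    · exact absurd (hc y x hxy.symm h) hrow.not_gt

lemma IsColumnSorted.le_of_row_le (hc : t.IsColumnSorted) {x y : Fin n}
    (hcol : t.col x = t.col y) (hrow : t.row x ≤ t.row y) : x ≤ y :=
  le_of_not_gt fun h => (hc y x hcol.symm h).not_ge hrow

lemma key_lt_swap_smul (hab : a < b) (hcol : t.col a = t.col b) (hrow : t.row b < t.row a) :
    t.key < (swap a b • t).key := by
  have hcol' : (swap a b • t).col = t.col := funext fun x => by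
    simpa using mem_colPerms.1 (swap_mem_colPerms hcol) x
  refine Prod.Lex.toLex_lt_toLex.2 (Or.inr ⟨by rw [hcol'], b, fun y hy => ?_, ?_⟩)
  · simp [swap_apply_of_ne_of_ne (hab.trans hy).ne' hy.ne']
  · simpa using hrow

variable (t) in
def lowerColumn (a : Fin n) : Finset (Fin n) := {z | t.col z = t.col a ∧ t.row a ≤ t.row z}

variable (t) in
def upperColumn (b : Fin n) : Finset (Fin n) := {z | t.col z = t.col b ∧ t.row z ≤ t.row b}

@[simp] lemma mem_lowerColumn {z : Fin n} :
    z ∈ t.lowerColumn a ↔ t.col z = t.col a ∧ t.row a ≤ t.row z := by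
  simp [lowerColumn]

@[simp] lemma mem_upperColumn {z : Fin n} :
    z ∈ t.upperColumn b ↔ t.col z = t.col b ∧ t.row z ≤ t.row b := by
  simp [upperColumn]

lemma IsColumnSorted.lt_of_mem_upperColumn_of_mem_lowerColumn (hc : t.IsColumnSorted)
    (hba : b < a) {w z : Fin n} (hw : w ∈ t.upperColumn b) (hz : z ∈ t.lowerColumn a) : w < z :=
  (hc.le_of_row_le (mem_upperColumn.1 hw).1 (mem_upperColumn.1 hw).2).trans_lt
    (hba.trans_le (hc.le_of_row_le (mem_lowerColumn.1 hz).1.symm (mem_lowerColumn.1 hz).2))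

lemma card_lt_card_lowerColumn_union (hpart : Antitone γ) (hrow : t.row a = t.row b)
    (hcol : t.col a < t.col b) :
    #{j | t.col a < γ j} < #(t.lowerColumn a ∪ t.upperColumn b) := by
  have hdisj : Disjoint (t.lowerColumn a) (t.upperColumn b) := disjoint_left.2 fun z h₁ h₂ =>
    hcol.ne ((mem_lowerColumn.1 h₁).1.symm.trans (mem_upperColumn.1 h₂).1)
  have hupper : (t.row b : ℕ) + 1 ≤ #(t.upperColumn b) := by
    rw [← Fin.card_Iic]
    refine card_le_card_of_surjOn t.row fun j hj => ?_
    obtain ⟨x, hx, hxc⟩ :=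
      t.exists_row_col j (t.col b) ((t.col_lt b).trans_le (hpart (mem_Iic.1 hj)))
    exact ⟨x, mem_upperColumn.2 ⟨hxc, hx ▸ mem_Iic.1 hj⟩, hx⟩
  have hrows : #{j | t.col a < γ j} ≤ #(t.lowerColumn a) + t.row b := by
    calc #{j | t.col a < γ j} ≤ #((t.lowerColumn a).image t.row ∪ Iio (t.row b)) := by
          refine card_le_card fun j hj => ?_
          rcases lt_or_ge j (t.row b) with h | h
          · exact mem_union_right _ (mem_Iio.2 h)
          · obtain ⟨x, hx, hxc⟩ := t.exists_row_col j (t.col a) (by simpa using hj)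
            exact mem_union_left _
              (mem_image.2 ⟨x, mem_lowerColumn.2 ⟨hxc, hrow ▸ hx ▸ h⟩, hx⟩)
      _ ≤ #(t.lowerColumn a) + t.row b :=
          (card_union_le _ _).trans (add_le_add card_image_le (by simp))
  rw [card_union_of_disjoint hdisj]
  omega

lemma exists_ne_row_eq_of_mem_colPerms (hpart : Antitone γ) (hrow : t.row a = t.row b)
    (hcol : t.col a < t.col b) {β : Perm (Fin n)} (hβ : β ∈ t.colPerms) :
    ∃ u ∈ t.lowerColumn a ∪ t.upperColumn b, ∃ w ∈ t.lowerColumn a ∪ t.upperColumn b,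
      u ≠ w ∧ t.row (β u) = t.row (β w) := by
  refine exists_ne_map_eq_of_card_lt_of_maps_to (card_lt_card_lowerColumn_union hpart hrow hcol)
    fun z hz => ?_
  have hz' : t.col a ≤ t.col z := by
    rcases mem_union.1 hz with h | h
    · exact (mem_lowerColumn.1 h).1.ge
    · exact (mem_upperColumn.1 h).1 ▸ hcol.le
  have hlt := t.col_lt (β z)
  rw [mem_colPerms.1 hβ] at hlt
  simpa using hz'.trans_lt hlt

/-- The Garnir relation. -/
theorem sum_sign_smul_polytabloid_smul_eq_zero {S : Finset (Fin n)}
    (hS : ∀ β ∈ t.colPerms, ∃ u ∈ S, ∃ w ∈ S, u ≠ w ∧ t.row (β u) = t.row (β w)) :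
    ∑ σ with σ.support ⊆ S, sign σ • (σ • t).polytabloid = 0 := by
  simp only [polytabloid_smul]
  simp only [polytabloid, map_sum, map_zsmul_unit, permAct_single, smul_sum]
  rw [sum_comm]
  refine sum_eq_zero fun β hβ => ?_
  obtain ⟨u, hu, w, hw, huw, hrow⟩ := hS β hβ
  simp only [smul_comm (sign _) (sign β)]
  rw [← smul_sum, Perm.sum_sign_smul_eq_zero_of_mul_swap huw (fun σ hσ => ?_) (fun σ _ => ?_),
    smul_zero]
  · simp only [mem_filter, mem_univ, true_and] at hσ ⊢
    refine (support_mul_le _ _).trans (sup_le hσ ?_)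
    rw [support_swap huw]
    simp [insert_subset_iff, hu, hw]
  · rw [mul_smul, OSP.swap_smul_eq_self (by simpa using hrow)]

lemma key_lt_smul (hc : t.IsColumnSorted) (hcol : t.col a < t.col b) (hba : b < a)
    {σ : Perm (Fin n)} (hσ : σ.support ⊆ t.lowerColumn a ∪ t.upperColumn b)
    (hσC : σ ∉ t.colPerms) : t.key < (σ • t).key := by
  set S := t.lowerColumn a ∪ t.upperColumn b
  have hσ' : σ⁻¹.support ⊆ S := by rwa [support_inv]
  obtain ⟨x, hx, hmax⟩ := exists_ne_forall_gt_eq (f := (σ • t).col) (g := t.col) fun h =>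
    hσC (by simpa using inv_mem_colPerms (mem_colPerms.2 (congrFun h)))
  simp only [smul_col] at hx hmax
  refine Prod.Lex.toLex_lt_toLex.2 (Or.inl ⟨x, fun y hy => (hmax y hy).symm, ?_⟩)
  change t.col x < t.col (σ⁻¹ x)
  have hxS : x ∈ S := by_contra fun h => hx (by rw [notMem_support.1 fun h' => h (hσ' h')])
  have hx'S := Perm.apply_mem_of_support_subset hσ' hxS
  rcases mem_union.1 hxS with hxl | hxu
  · rcases mem_union.1 hx'S with h | h
    · exact absurd ((mem_lowerColumn.1 h).1.trans (mem_lowerColumn.1 hxl).1.symm) hx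
    · rwa [(mem_lowerColumn.1 hxl).1, (mem_upperColumn.1 h).1]
  · exfalso
    -- Every entry of `lowerColumn a` lies after `x`, so `σ⁻¹` keeps it in its column.
    have hlow (z : Fin n) (hz : z ∈ t.lowerColumn a) : σ⁻¹ z ∈ t.lowerColumn a := by
      have hcz := hmax z (hc.lt_of_mem_upperColumn_of_mem_lowerColumn hba hxu hz)
      refine (mem_union.1 (Perm.apply_mem_of_support_subset hσ' (mem_union_left _ hz)))
        |>.resolve_right fun h => hcol.ne ?_
      rw [← (mem_lowerColumn.1 hz).1, ← hcz, (mem_upperColumn.1 h).1]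
    have hx' : σ⁻¹ x ∈ t.lowerColumn a := (mem_union.1 hx'S).resolve_right fun h =>
      hx ((mem_upperColumn.1 h).1.trans (mem_upperColumn.1 hxu).1.symm)
    exact hcol.ne ((mem_lowerColumn.1 (Perm.mem_of_apply_mem hlow hx')).1.symm.trans
      (mem_upperColumn.1 hxu).1)

theorem polytabloid_mem_span_of_row_descent (hpart : Antitone γ) (hc : t.IsColumnSorted)
    (hrow : t.row a = t.row b) (hcol : t.col a < t.col b) (hba : b < a) :
    t.polytabloid ∈ Submodule.span ℝ (polytabloid '' {s | t.key < s.key}) := by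
  set G := univ.filter fun σ : Perm (Fin n) => σ.support ⊆ t.lowerColumn a ∪ t.upperColumn b
  have hzero := sum_sign_smul_polytabloid_smul_eq_zero
    fun β hβ => exists_ne_row_eq_of_mem_colPerms hpart hrow hcol hβ
  rw [← sum_filter_add_sum_filter_not G (· ∈ t.colPerms)] at hzero
  set H := G.filter (· ∈ t.colPerms)
  have hH : ∑ σ ∈ H, sign σ • (σ • t).polytabloid = (#H : ℝ) • t.polytabloid := by
    rw [sum_congr rfl fun σ hσ => ?_, sum_const, Nat.cast_smul_eq_nsmul]
    rw [polytabloid_smul, permAct_polytabloid (mem_filter.1 hσ).2, smul_smul, Int.units_mul_self,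
      one_smul]
  have h1 : (1 : Perm (Fin n)) ∈ H := by simp [H, G, one_mem_colPerms]
  rw [hH, add_eq_zero_iff_eq_neg] at hzero
  refine (Submodule.smul_mem_iff _ ((Nat.cast_ne_zero (R := ℝ)).2 (card_ne_zero_of_mem h1))).1 ?_
  rw [hzero]
  refine neg_mem (Submodule.sum_mem _ fun σ hσ => Submodule.smul_of_tower_mem _ _
    (Submodule.subset_span ⟨σ • t, ?_, rfl⟩))
  obtain ⟨hσG, hσC⟩ := mem_filter.1 hσ
  exact key_lt_smul hc hcol hba (mem_filter.1 hσG).2 hσC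

end Tableau

def standardSpan (n ℓ : ℕ) (γ : Fin ℓ → ℕ) : Submodule ℝ (OSP n ℓ γ → ℝ) :=
  Submodule.span ℝ (Set.range fun π : {π : OSP n ℓ γ // IsStandard π} => polytabloid π.1)

theorem Tableau.polytabloid_mem_standardSpan (hpart : Antitone γ) (t : Tableau n ℓ γ) :
    t.polytabloid ∈ standardSpan n ℓ γ := by
  induction t using Tableau.induction_key with
  | h t ih =>
  by_cases hc : t.IsColumnSorted
  · by_cases hr : t.IsRowSorted
    · rw [← ofOSP_toOSP hr, polytabloid_ofOSP]
      exact Submodule.subset_span ⟨⟨_, isStandard_toOSP hc hr⟩, rfl⟩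
    · obtain ⟨a, b, hrow, hcol, hab⟩ : ∃ a b, t.row a = t.row b ∧ t.col a < t.col b ∧ ¬a < b := by
        simpa [IsRowSorted] using hr
      refine Submodule.span_le.2 ?_ (polytabloid_mem_span_of_row_descent hpart hc hrow hcol
        (lt_of_le_of_ne (not_lt.1 hab) fun h => hcol.ne (by rw [h])))
      rintro _ ⟨s, hs, rfl⟩
      exact ih s hs
  · obtain ⟨a, b, hcol, hab, hrow⟩ : ∃ a b, t.col a = t.col b ∧ a < b ∧ ¬t.row a < t.row b := by
      simpa [IsColumnSorted] using hc
    have hrow' : t.row b < t.row a :=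
      lt_of_le_of_ne (not_lt.1 hrow) fun h => hab.ne (t.eq_of_row_col a b h.symm hcol)
    rw [← neg_neg t.polytabloid, ← polytabloid_swap_smul hab.ne hcol]
    exact neg_mem (ih _ (key_lt_swap_smul hab hcol hrow'))

instance : MulAction.IsPretransitive (Perm (Fin n)) (OSP n ℓ γ) :=
  ⟨fun μ ν => (Tableau.exists_smul_eq (.ofOSP μ) (.ofOSP ν)).imp fun σ h => by
    simpa using congrArg Tableau.toOSP h⟩

lemma permAct_mem_standardSpan (hpart : Antitone γ) {v : OSP n ℓ γ → ℝ} (hv : v ∈ Specht n ℓ γ)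
    (σ : Perm (Fin n)) : permAct σ v ∈ standardSpan n ℓ γ := by
  refine (Submodule.span_le (p := (standardSpan n ℓ γ).comap (permAct σ))).2 ?_ hv
  rintro _ ⟨μ, rfl⟩
  rw [SetLike.mem_coe, Submodule.mem_comap, ← Tableau.polytabloid_ofOSP,
    ← Tableau.polytabloid_smul]
  exact Tableau.polytabloid_mem_standardSpan hpart _

lemma span_rhoL_liftB (v : OSP n ℓ γ → ℝ) (π₀ : OSP n ℓ γ) :
    Submodule.span ℝ {f | ∃ σ : Perm (Fin n), f = rhoL σ (liftB π₀ v)} =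
      Submodule.span ℝ (Set.range fun μ : OSP n ℓ γ => liftB μ v) := by
  congr 1
  ext f
  simp only [Set.mem_ofPred_eq, Set.mem_range, rhoL_liftB]
  constructor
  · rintro ⟨σ, rfl⟩
    exact ⟨_, rfl⟩
  · rintro ⟨μ, rfl⟩
    obtain ⟨σ, rfl⟩ := MulAction.exists_smul_eq (Perm (Fin n)) π₀ μ
    exact ⟨σ, rfl⟩

noncomputable def liftingMap (v : OSP n ℓ γ → ℝ) : (OSP n ℓ γ → ℝ) →ₗ[ℝ] Perm (Fin n) → ℝ :=
  Fintype.linearCombination ℝ fun μ => liftB μ v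

lemma liftingMap_apply (v x : OSP n ℓ γ → ℝ) (σ : Perm (Fin n)) :
    liftingMap v x σ = x ⬝ᵥ permAct σ v := by
  simp [liftingMap, Fintype.linearCombination_apply, Finset.sum_apply, dotProduct, liftB,
    ospAct_eq_smul]

theorem finrank_span_liftB_le (hpart : Antitone γ) {v : OSP n ℓ γ → ℝ} (hv : v ∈ Specht n ℓ γ) :
    Module.finrank ℝ (Submodule.span ℝ (Set.range fun μ : OSP n ℓ γ => liftB μ v)) ≤
      Fintype.card {π : OSP n ℓ γ // IsStandard π} := by
  let Φ := Matrix.mulVecLin fun π : {π : OSP n ℓ γ // IsStandard π} => polytabloid π.1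
  rw [← Fintype.range_linearCombination]
  refine (LinearMap.finrank_range_le_of_ker_le (liftingMap v) Φ fun x hx => ?_).trans
    ((Submodule.finrank_le _).trans (Module.finrank_fintype_fun_eq_card ℝ).le)
  rw [LinearMap.mem_ker] at hx ⊢
  funext σ
  rw [liftingMap_apply]
  refine dotProduct_eq_zero_of_mem_span ?_ (permAct_mem_standardSpan hpart hv σ)
  rintro _ ⟨π, rfl⟩
  rw [dotProduct_comm]
  exact congrFun hx π

theorem linearIndependent_liftB_standard {v : OSP n ℓ γ → ℝ} (hv : v ∈ Specht n ℓ γ)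
    (hv0 : v ≠ 0) :
    LinearIndependent ℝ fun π : {π : OSP n ℓ γ // IsStandard π} => liftB π.1 v := by
  rw [Fintype.linearIndependent_iff]
  intro g hg
  set x : OSP n ℓ γ → ℝ := ∑ π, g π • Pi.single π.1 1
  have hx (π : {π : OSP n ℓ γ // IsStandard π}) : x π.1 = g π := by
    simp [x, Finset.sum_apply, Pi.single_apply, ← Subtype.ext_iff]
  have hsupp (ρ : OSP n ℓ γ) (hρ : x ρ ≠ 0) : IsStandard ρ := by
    by_contra h
    refine hρ ((Finset.sum_apply ρ _ _).trans (sum_eq_zero fun π _ => ?_))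
    have hne : ρ ≠ π.1 := fun h' => h (h' ▸ π.2)
    simp [hne]
  have hker : liftingMap v x = 0 := by
    simpa [x, liftingMap, map_sum] using hg
  have hx0 : x = 0 := eq_zero_of_dotProduct_polytabloid_eq_zero hsupp fun τ _ =>
    dotProduct_eq_zero_of_mem_span (by rintro _ ⟨σ, rfl⟩; rw [← liftingMap_apply, hker]; rfl)
      (polytabloid_mem_span_permAct hv hv0 τ)
  intro π
  rw [← hx π, hx0, Pi.zero_apply]

end

theorem standard_liftings_basis_general {n ℓ : ℕ} (γ : Fin ℓ → ℕ)
    (hpart : Antitone γ)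
    (v : OSP n ℓ γ → ℝ) (hv : v ∈ Specht n ℓ γ) (hv0 : v ≠ 0) (π₀ : OSP n ℓ γ) :
    LinearIndependent ℝ
      (fun π : {π : OSP n ℓ γ // IsStandard π} => liftB π.1 v) ∧
    Submodule.span ℝ
        (Set.range fun π : {π : OSP n ℓ γ // IsStandard π} => liftB π.1 v) =
      Submodule.span ℝ {f | ∃ σ : Equiv.Perm (Fin n), f = rhoL σ (liftB π₀ v)} ∧
    Submodule.span ℝ {f | ∃ σ : Equiv.Perm (Fin n), f = rhoL σ (liftB π₀ v)} =
      Submodule.span ℝ (Set.range fun μ : OSP n ℓ γ => liftB μ v) ∧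
    Module.finrank ℝ
        (Submodule.span ℝ {f | ∃ σ : Equiv.Perm (Fin n), f = rhoL σ (liftB π₀ v)}) =
      Nat.card {π : OSP n ℓ γ // IsStandard π} := by
  have hindep := linearIndependent_liftB_standard hv hv0
  have horbit := span_rhoL_liftB v π₀
  have hstd : Submodule.span ℝ (Set.range fun π : {π // IsStandard π} => liftB π.1 v) =
      Submodule.span ℝ (Set.range fun μ => liftB μ v) :=
    Submodule.eq_of_le_of_finrank_le
      (Submodule.span_mono (Set.range_comp_subset_range Subtype.val fun μ => liftB μ v))
      ((finrank_span_liftB_le hpart hv).trans (finrank_span_eq_card hindep).ge)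
  refine ⟨hindep, hstd.trans horbit.symm, horbit, ?_⟩
  rw [horbit, ← hstd, finrank_span_eq_card hindep, Nat.card_eq_fintype_card]

/-- standard liftings form a basis: for `0 ≠ v ∈ V_γ*` (the Specht
submodule) and any `π₀ ∈ Π_γ`, the family `{B_π v : π standard}` is a basis of the left
`S_n`-module generated by `B_{π₀} v`; in particular this module equals the span of all
liftings `{B_μ v : μ ∈ Π_γ}`, and its dimension is the number of standard ordered set
partitions of shape `γ`. -/
theorem standard_liftings_basis {n ℓ : ℕ} (hn : 1 ≤ n) (γ : Fin ℓ → ℕ)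
    (hpart : Antitone γ) (hsum : ∑ j, γ j = n)
    (v : OSP n ℓ γ → ℝ) (hv : v ∈ Specht n ℓ γ) (hv0 : v ≠ 0) (π₀ : OSP n ℓ γ) :
    LinearIndependent ℝ
      (fun π : {π : OSP n ℓ γ // IsStandard π} => liftB π.1 v) ∧
    Submodule.span ℝ
        (Set.range fun π : {π : OSP n ℓ γ // IsStandard π} => liftB π.1 v) =
      Submodule.span ℝ {f | ∃ σ : Equiv.Perm (Fin n), f = rhoL σ (liftB π₀ v)} ∧
    Submodule.span ℝ {f | ∃ σ : Equiv.Perm (Fin n), f = rhoL σ (liftB π₀ v)} =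
      Submodule.span ℝ (Set.range fun μ : OSP n ℓ γ => liftB μ v) ∧
    Module.finrank ℝ
        (Submodule.span ℝ {f | ∃ σ : Equiv.Perm (Fin n), f = rhoL σ (liftB π₀ v)}) =
      Nat.card {π : OSP n ℓ γ // IsStandard π} :=
  standard_liftings_basis_general γ hpart v hv hv0 π₀
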